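/- Let n ≥ 3. Then in LCTR, SG((n³)) = SG((3ⁿ)) = 0 if n is odd, and SG((n³)) = SG((3ⁿ)) = 1 if n is even, where (n³) denotes the partition with three parts equal to n and (3ⁿ) the partition with n parts equal to 3. -/

import Mathlib

/-!
Both moves keep a rectangle a rectangle: from `(bᵃ)`, `L` leads to `((b-1)ᵃ)` and `T` to
`(bᵃ⁻¹)`. So on rectangles `SG` obeys `g(a+1, b+1) = mex {g(a+1, b), g(a, b+1)}` with `g = 0`
on the boundary, a recursion symmetric in `a` and `b`; hence `SG((bᵃ)) = SG((aᵇ))`. Running the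
recursion along the rows `a = 1, 2, 3` shows that they become 2-periodic:
`1, 2, 1, 2, …`, then `2, 0, 2, 0, …`, then `1, 2, 0, 1, 0, 1, …`.
-/

/-- Remove the left column of a Young diagram: subtract 1 from each part and
omit nonpositive values. -/
def leftCol (l : List ℕ) : List ℕ := (l.map (· - 1)).filter (0 < ·)

/-- Remove the top row of a Young diagram. -/
def topRow (l : List ℕ) : List ℕ := l.tail

/-- Minimum excluded value of a set of naturals. -/
noncomputable def mex (s : Set ℕ) : ℕ := sInf {n | n ∉ s}

def wt (l : List ℕ) : ℕ := l.sum + l.length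

lemma wt_leftCol_le (l : List ℕ) : wt (leftCol l) ≤ l.sum := by
  induction l with
  | nil => simp [leftCol, wt]
  | cons a t ih =>
    simp only [leftCol, wt] at ih ⊢
    rw [List.map_cons, List.filter_cons]
    by_cases h : 0 < a - 1
    · simp only [h, decide_true, if_true, List.sum_cons, List.length_cons]
      omega
    · simp only [h, decide_false, Bool.false_eq_true, if_false, List.sum_cons]
      omega

lemma wt_leftCol_lt (l : List ℕ) (h : l ≠ []) : wt (leftCol l) < wt l := by
  have h1 := wt_leftCol_le l
  have h2 : 0 < l.length := List.length_pos_iff.mpr h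
  unfold wt at *
  omega

lemma wt_topRow_lt (l : List ℕ) (h : l ≠ []) : wt (topRow l) < wt l := by
  cases l with
  | nil => exact absurd rfl h
  | cons a t => simp [topRow, wt]; omega

/-- The Sprague–Grundy value of a position in the LCTR game. -/
noncomputable def SG (l : List ℕ) : ℕ :=
  if h : l = [] then 0
  else mex {SG (leftCol l), SG (topRow l)}
termination_by wt l
decreasing_by
  · exact wt_leftCol_lt l h
  · exact wt_topRow_lt l h

/-- A partition: a non-increasing list of positive integers. -/
def IsPartition (l : List ℕ) : Prop := l.Pairwise (· ≥ ·) ∧ ∀ x ∈ l, 0 < x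

/-- The conjugate partition: the `j`-th part (for `1 ≤ j ≤ l₁`) is the number
of parts of `l` that are at least `j`. -/
def conj (l : List ℕ) : List ℕ :=
  (List.range (l.headD 0)).map (fun j => l.countP (fun x => decide (j < x)))

lemma SG_nil : SG [] = 0 := by
  rw [SG, dif_pos rfl]

lemma SG_of_ne_nil {l : List ℕ} (h : l ≠ []) :
    SG l = mex {SG (leftCol l), SG (topRow l)} := by
  rw [SG, dif_neg h]

lemma mex_eq {s : Set ℕ} {n : ℕ} (hn : n ∉ s) (hlt : ∀ m < n, m ∈ s) : mex s = n :=
  le_antisymm (Nat.sInf_le hn)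
    (not_lt.mp fun h => Nat.sInf_mem (s := {m | m ∉ s}) ⟨n, hn⟩ (hlt _ h))

lemma mex_pair (a b : ℕ) :
    mex {a, b} = if a ≠ 0 ∧ b ≠ 0 then 0 else if a ≠ 1 ∧ b ≠ 1 then 1 else 2 := by
  apply mex_eq
  · split_ifs <;> simp only [Set.mem_insert_iff, Set.mem_singleton_iff] <;> omega
  · intro m hm
    split_ifs at hm <;> simp only [Set.mem_insert_iff, Set.mem_singleton_iff] <;> omega

lemma mex_singleton (a : ℕ) : mex {a} = if a ≠ 0 then 0 else 1 := by
  rw [← Set.pair_eq_singleton, mex_pair]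
  split_ifs <;> omega

/-- The rectangle `(bᵃ)`: `a` rows of length `b`. Sending `b = 0` to the empty partition makes
both moves map rectangles to rectangles. -/
def rect (a b : ℕ) : List ℕ := (List.replicate a b).filter (0 < ·)

lemma rect_of_pos {b : ℕ} (a : ℕ) (hb : 0 < b) : rect a b = List.replicate a b := by
  simp [rect, hb]

@[simp] lemma SG_rect_zero_left (b : ℕ) : SG (rect 0 b) = 0 := by
  simp [rect, SG_nil]

@[simp] lemma SG_rect_zero_right (a : ℕ) : SG (rect a 0) = 0 := by
  simp [rect, SG_nil]

lemma leftCol_rect (a b : ℕ) : leftCol (rect a (b + 1)) = rect a b := by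
  simp [leftCol, rect]

lemma topRow_rect (a b : ℕ) : topRow (rect (a + 1) b) = rect a b := by
  by_cases hb : 0 < b <;> simp [topRow, rect, hb]

lemma SG_rect_succ_succ (a b : ℕ) :
    SG (rect (a + 1) (b + 1)) = mex {SG (rect (a + 1) b), SG (rect a (b + 1))} := by
  rw [SG_of_ne_nil (by simp [rect]), leftCol_rect, topRow_rect]

lemma SG_rect_comm (a b : ℕ) : SG (rect a b) = SG (rect b a) := by
  induction a generalizing b with
  | zero => simp
  | succ a iha =>
    induction b with
    | zero => simp
    | succ b ihb => rw [SG_rect_succ_succ, SG_rect_succ_succ, ihb, iha, Set.pair_comm]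

lemma SG_rect_one (b : ℕ) : SG (rect 1 (b + 1)) = if Even b then 1 else 2 := by
  induction b with
  | zero => rw [SG_rect_succ_succ, SG_rect_zero_right, SG_rect_zero_left, mex_pair]; simp
  | succ b ih =>
    rw [SG_rect_succ_succ, ih, SG_rect_zero_left]
    by_cases hb : Even b <;> simp [hb, mex_pair, Nat.even_add_one]

lemma SG_rect_two (b : ℕ) : SG (rect 2 (b + 1)) = if Even b then 2 else 0 := by
  induction b with
  | zero => rw [SG_rect_succ_succ, SG_rect_zero_right, SG_rect_one, mex_pair]; simp
  | succ b ih =>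
    rw [SG_rect_succ_succ, ih, SG_rect_one]
    by_cases hb : Even b <;> simp [hb, mex_pair, mex_singleton, Nat.even_add_one]

lemma SG_rect_three (b : ℕ) : SG (rect 3 (b + 3)) = if Even b then 0 else 1 := by
  induction b with
  | zero =>
    rw [SG_rect_succ_succ, SG_rect_succ_succ, SG_rect_succ_succ, SG_rect_zero_right]
    simp [SG_rect_two, mex_pair, mex_singleton]
  | succ b ih =>
    rw [SG_rect_succ_succ, ih, SG_rect_two]
    by_cases hb : Even b <;> simp [hb, mex_pair, mex_singleton, Nat.even_add_one]

/-- For `n ≥ 3`, the partitions `(n³)` and `(3ⁿ)` have Sprague–Grundy value 0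
if `n` is odd and 1 if `n` is even. -/
theorem SG_three_rows (n : ℕ) (hn : 3 ≤ n) :
    (Odd n → SG (List.replicate 3 n) = 0 ∧ SG (List.replicate n 3) = 0) ∧
    (Even n → SG (List.replicate 3 n) = 1 ∧ SG (List.replicate n 3) = 1) := by
  have hcols : SG (List.replicate n 3) = SG (List.replicate 3 n) := by
    rw [← rect_of_pos n (by norm_num), ← rect_of_pos 3 (by omega), SG_rect_comm]
  obtain ⟨b, rfl⟩ : ∃ b, n = b + 3 := ⟨n - 3, by omega⟩
  rw [hcols, and_self, and_self, ← rect_of_pos 3 (by omega), SG_rect_three]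
  by_cases hb : Even b <;> simp [hb, Nat.even_add_one, ← Nat.not_even_iff_odd]
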